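/- With ε, (r_i), and N_i as above, there exists a constant C = C(ε) > 0 such that for all j ≥ 0 and ℓ ≥ 0, every entry of the product N_j·N_{j+2}·...·N_{j+2ℓ} is at most C, and moreover the (3,4) entry is at least 1/3 and the (4,4) entry is at least 1. -/

import Mathlib

open Matrix

/-- The matrix `N i` from the paper, built from the sequence `(r i)`. -/
noncomputable def Nmat (r : ℕ → ℝ) (i : ℕ) : Matrix (Fin 5) (Fin 5) ℝ :=
  !![0, (2 * r i - 1) / (2 * r (i + 1)), r i / r (i + 1), 0, 0;
     0, r i / r (i + 1), (2 * r i + 1) / (2 * r (i + 1)), 0, 0;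
     0, 0, 0, (2 * r (i + 1) - 1) / (2 * r (i + 1)), 1;
     0, 0, 0, 1, (2 * r (i + 1) + 1) / (2 * r (i + 1));
     1 / (2 * r (i + 1)), 0, 0, 0, 0]

/-- The product `N j * N (j+2) * ⋯ * N (j+2ℓ)`. -/
noncomputable def prodN (r : ℕ → ℝ) (j ℓ : ℕ) : Matrix (Fin 5) (Fin 5) ℝ :=
  ((List.range (ℓ + 1)).map (fun t => Nmat r (j + 2 * t))).prod
lemma prodN_zero (r : ℕ → ℝ) (j : ℕ) : prodN r j 0 = Nmat r j := by
  show (List.map _ (List.range 1)).prod = _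
  rw [List.range_succ]; simp

lemma prodN_succ (r : ℕ → ℝ) (j ℓ : ℕ) :
    prodN r j (ℓ + 1) = prodN r j ℓ * Nmat r (j + 2 * (ℓ + 1)) := by
  unfold prodN
  rw [List.range_succ, List.map_append, List.prod_append]
  simp

lemma prodN_cons (r : ℕ → ℝ) (j ℓ : ℕ) :
    prodN r j (ℓ + 1) = Nmat r j * prodN r (j + 2) ℓ := by
  unfold prodN
  rw [List.range_succ_eq_map, List.map_cons, List.prod_cons, List.map_map]
  have h : ((fun t => Nmat r (j + 2 * t)) ∘ Nat.succ) = fun t => Nmat r (j + 2 + 2 * t) := by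
    funext t
    have : j + 2 * Nat.succ t = j + 2 + 2 * t := by omega
    simp [Function.comp, this]
  rw [h]
  norm_num

lemma mulN_apply (r : ℕ → ℝ) (M : Matrix (Fin 5) (Fin 5) ℝ) (i : ℕ) (s : Fin 5) :
    (M * Nmat r i) s 0 = M s 4 * (1 / (2 * r (i+1))) ∧
    (M * Nmat r i) s 1 = M s 0 * ((2 * r i - 1) / (2 * r (i + 1))) + M s 1 * (r i / r (i+1)) ∧
    (M * Nmat r i) s 2 = M s 0 * (r i / r (i+1)) + M s 1 * ((2 * r i + 1) / (2 * r (i + 1))) ∧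
    (M * Nmat r i) s 3 = M s 2 * ((2 * r (i+1) - 1) / (2 * r (i + 1))) + M s 3 ∧
    (M * Nmat r i) s 4 = M s 2 + M s 3 * ((2 * r (i+1) + 1) / (2 * r (i + 1))) := by
  refine ⟨?_, ?_, ?_, ?_, ?_⟩ <;>
    simp [Nmat, Matrix.mul_apply, Fin.sum_univ_five, Matrix.vecHead, Matrix.vecTail]

section Main

variable (ε : ℝ) (r : ℕ → ℝ)

lemma rge (hε0 : 0 < ε) (hε : ε < 1 / 2) (hrpos : ∀ i, 1 ≤ i → 0 < r i)
    (hr1 : 1 / ε ≤ r 1) (hstep : ∀ i, 1 ≤ i → r i ≤ ε * r (i + 1)) :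
    ∀ i, 1 ≤ i → (2 : ℝ) ^ i ≤ r i := by
  intro i hi
  induction i, hi using Nat.le_induction with
  | base =>
      have h2 : (2 : ℝ) ≤ 1 / ε := by
        rw [le_div_iff₀ hε0]; linarith
      simpa using h2.trans hr1
  | succ n hn ih =>
      have h1 := hstep n hn
      have h2 := hrpos (n + 1) (by omega)
      have : ε * r (n + 1) ≤ (1 / 2) * r (n + 1) := by nlinarith
      have h3 : (2 : ℝ) ^ n * 2 ≤ r (n + 1) := by nlinarith
      calc (2:ℝ) ^ (n+1) = 2 ^ n * 2 := by ring
        _ ≤ r (n + 1) := h3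

/-- two r's dominate: key double-step inequality -/
lemma rdouble (hε0 : 0 < ε) (hε : ε < 1 / 2) (hrpos : ∀ i, 1 ≤ i → 0 < r i)
    (hstep : ∀ i, 1 ≤ i → r i ≤ ε * r (i + 1)) :
    ∀ i, 1 ≤ i → 2 * r i ≤ r (i + 1) := by
  intro i hi
  have h1 := hstep i hi
  have h2 := hrpos (i + 1) (by omega)
  nlinarith

set_option maxHeartbeats 2000000 in
lemma invariant (hε0 : 0 < ε) (hε : ε < 1 / 2) (hrpos : ∀ i, 1 ≤ i → 0 < r i)
    (hr1 : 1 / ε ≤ r 1) (hstep : ∀ i, 1 ≤ i → r i ≤ ε * r (i + 1))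
    (j : ℕ) (hj : 1 ≤ j) (ℓ : ℕ) :
    (∀ s t : Fin 5, 0 ≤ prodN r j ℓ s t) ∧
    (∀ s, prodN r j ℓ s 0 ≤ 5/8 * (1/4 : ℝ) ^ ℓ) ∧
    (∀ s, prodN r j ℓ s 1 ≤ 7/4 * (1/2 : ℝ) ^ ℓ - 5/4 * (1/4 : ℝ) ^ ℓ) ∧
    (∀ s, prodN r j ℓ s 2 ≤ 7/4 * (1/2 : ℝ) ^ ℓ - (1/4 : ℝ) ^ ℓ) ∧
    (∀ s, prodN r j ℓ s 3 ≤ 5 - 7/2 * (1/2 : ℝ) ^ ℓ) ∧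
    (∀ s, prodN r j ℓ s 4 ≤ 5 - 7/2 * (1/2 : ℝ) ^ ℓ) ∧
    (1/3 : ℝ) ≤ prodN r j ℓ 2 3 ∧ (1 : ℝ) ≤ prodN r j ℓ 3 3 := by
  have hrg := rge ε r hε0 hε hrpos hr1 hstep
  have hrd := rdouble ε r hε0 hε hrpos hstep
  induction ℓ with
  | zero =>
      rw [prodN_zero]
      -- facts about the entries of Nmat r j
      have hj1 : (2:ℝ) ≤ r j := by
        have := hrg j hj
        calc (2:ℝ) = 2^1 := by norm_num
          _ ≤ 2^j := pow_le_pow_right₀ (by norm_num) hj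
          _ ≤ r j := this
      have hj2 : (4:ℝ) ≤ r (j+1) := by
        have := hrg (j+1) (by omega)
        calc (4:ℝ) = 2^2 := by norm_num
          _ ≤ 2^(j+1) := pow_le_pow_right₀ (by norm_num) (by omega)
          _ ≤ r (j+1) := this
      have hd := hrd j hj
      have hx : (0:ℝ) < 2 * r (j+1) := by linarith
      have hx0 : (0:ℝ) < r (j+1) := by linarith
      have hG : 1 / (2 * r (j+1)) ≤ 1/8 := by
        rw [div_le_iff₀ hx]; linarith
      have hG0 : 0 < 1 / (2 * r (j+1)) := by positivity
      have hA0 : 0 ≤ (2 * r j - 1) / (2 * r (j+1)) := by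
        apply div_nonneg <;> linarith
      have hA : (2 * r j - 1) / (2 * r (j+1)) ≤ 1/2 := by
        rw [div_le_iff₀ hx]; linarith
      have hC0 : 0 ≤ r j / r (j+1) := by apply div_nonneg <;> linarith
      have hC : r j / r (j+1) ≤ 1/2 := by
        rw [div_le_iff₀ hx0]; linarith
      have hD0 : 0 ≤ (2 * r j + 1) / (2 * r (j+1)) := by
        apply div_nonneg <;> linarith
      have hD : (2 * r j + 1) / (2 * r (j+1)) ≤ 5/8 := by
        rw [div_le_iff₀ hx]; nlinarith
      have hE0 : 0 ≤ (2 * r (j+1) - 1) / (2 * r (j+1)) := by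
        apply div_nonneg <;> linarith
      have hEeq : (2 * r (j+1) - 1) / (2 * r (j+1)) = 1 - 1 / (2 * r (j+1)) := by
        field_simp
      have hF0 : 0 ≤ (2 * r (j+1) + 1) / (2 * r (j+1)) := by
        apply div_nonneg <;> linarith
      have hF : (2 * r (j+1) + 1) / (2 * r (j+1)) ≤ 9/8 := by
        rw [div_le_iff₀ hx]; linarith
      refine ⟨?_, ?_, ?_, ?_, ?_, ?_, ?_, ?_⟩
      · intro s t
        fin_cases s <;> fin_cases t <;>
          first
            | exact le_refl (0:ℝ)
            | exact zero_le_one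
            | exact hA0
            | exact hC0
            | exact hD0
            | exact hE0
            | exact hF0
            | exact hG0.le
      · intro s
        fin_cases s
        · show (0:ℝ) ≤ _; norm_num
        · show (0:ℝ) ≤ _; norm_num
        · show (0:ℝ) ≤ _; norm_num
        · show (0:ℝ) ≤ _; norm_num
        · show 1 / (2 * r (j+1)) ≤ _; simp only [pow_zero]; linarith
      · intro s
        fin_cases s
        · show (2 * r j - 1) / (2 * r (j+1)) ≤ _; simp only [pow_zero]; linarith
        · show r j / r (j+1) ≤ _; simp only [pow_zero]; linarith
        · show (0:ℝ) ≤ _; norm_num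
        · show (0:ℝ) ≤ _; norm_num
        · show (0:ℝ) ≤ _; norm_num
      · intro s
        fin_cases s
        · show r j / r (j+1) ≤ _; simp only [pow_zero]; linarith
        · show (2 * r j + 1) / (2 * r (j+1)) ≤ _; simp only [pow_zero]; linarith
        · show (0:ℝ) ≤ _; norm_num
        · show (0:ℝ) ≤ _; norm_num
        · show (0:ℝ) ≤ _; norm_num
      · intro s
        fin_cases s
        · show (0:ℝ) ≤ _; norm_num
        · show (0:ℝ) ≤ _; norm_num
        · show (2 * r (j+1) - 1) / (2 * r (j+1)) ≤ _
          simp only [pow_zero]; rw [hEeq]; linarith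
        · show (1:ℝ) ≤ _; simp only [pow_zero]; norm_num
        · show (0:ℝ) ≤ _; norm_num
      · intro s
        fin_cases s
        · show (0:ℝ) ≤ _; norm_num
        · show (0:ℝ) ≤ _; norm_num
        · show (1:ℝ) ≤ _; simp only [pow_zero]; norm_num
        · show (2 * r (j+1) + 1) / (2 * r (j+1)) ≤ _; simp only [pow_zero]; linarith
        · show (0:ℝ) ≤ _; norm_num
      · show (1/3:ℝ) ≤ (2 * r (j+1) - 1) / (2 * r (j+1))
        rw [hEeq]; linarith
      · show (1:ℝ) ≤ (1:ℝ)
        exact le_rfl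
  | succ ℓ ih =>
      obtain ⟨ihnn, ih0, ih1, ih2, ih3, ih4, ihL, ihL'⟩ := ih
      obtain ⟨i, hi⟩ : ∃ i, i = j + 2 * (ℓ + 1) := ⟨_, rfl⟩
      obtain ⟨M, hM⟩ : ∃ M, M = prodN r j ℓ := ⟨_, rfl⟩
      rw [← hM] at ihnn ih0 ih1 ih2 ih3 ih4 ihL ihL'
      have hpr : prodN r j (ℓ + 1) = M * Nmat r i := by
        rw [hM, hi]; exact prodN_succ r j ℓ
      -- powers
      have hx1 : (1/2:ℝ)^ℓ ≤ 1 := pow_le_one₀ (by norm_num) (by norm_num)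
      have hyx : (1/4:ℝ)^ℓ ≤ (1/2:ℝ)^ℓ := pow_le_pow_left₀ (by norm_num) (by norm_num) ℓ
      have hy0 : (0:ℝ) < (1/4:ℝ)^ℓ := by positivity
      have hx0 : (0:ℝ) < (1/2:ℝ)^ℓ := by positivity
      -- r facts at index i
      have hii : (2:ℝ) ≤ r i := by
        have := hrg i (by omega)
        calc (2:ℝ) = 2^1 := by norm_num
          _ ≤ 2^i := pow_le_pow_right₀ (by norm_num) (by omega)
          _ ≤ r i := this
      have hgrow : 16 * (4:ℝ)^ℓ ≤ r (i+1) := by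
        have h1 := hrg (i+1) (by omega)
        have h2 : (2:ℝ)^(2*ℓ+4) ≤ 2^(i+1) := pow_le_pow_right₀ (by norm_num) (by omega)
        have h3 : (2:ℝ)^(2*ℓ+4) = 16 * 4^ℓ := by
          rw [pow_add, pow_mul]; norm_num; ring
        linarith
      have h4p : (0:ℝ) < (4:ℝ)^ℓ := by positivity
      have hri1 : (0:ℝ) < r (i+1) := by nlinarith
      have hxp : (0:ℝ) < 2 * r (i+1) := by linarith
      have hd := hrd i (by omega)
      have hG0 : 0 < 1 / (2 * r (i+1)) := by positivity
      have hG : 1 / (2 * r (i+1)) ≤ 1/32 * (1/4:ℝ)^ℓ := by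
        have e1 : (1/4:ℝ)^ℓ = ((4:ℝ)^ℓ)⁻¹ := by rw [one_div, inv_pow]
        have h2 : (32:ℝ) * 4^ℓ ≤ 2 * r (i+1) := by linarith
        have h3 : ((4:ℝ)^ℓ)⁻¹ * (32 * 4^ℓ) ≤ ((4:ℝ)^ℓ)⁻¹ * (2 * r (i+1)) :=
          mul_le_mul_of_nonneg_left h2 (by positivity)
        have h4 : ((4:ℝ)^ℓ)⁻¹ * (32 * 4^ℓ) = 32 := by
          field_simp
        rw [e1, div_le_iff₀ hxp]
        nlinarith [h3, h4]
      have hA0 : 0 ≤ (2 * r i - 1) / (2 * r (i+1)) := by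
        apply div_nonneg <;> linarith
      have hA : (2 * r i - 1) / (2 * r (i+1)) ≤ 1/2 := by
        rw [div_le_iff₀ hxp]; linarith
      have hC0 : 0 ≤ r i / r (i+1) := by apply div_nonneg <;> linarith
      have hC : r i / r (i+1) ≤ 1/2 := by
        rw [div_le_iff₀ hri1]; linarith
      have hD0 : 0 ≤ (2 * r i + 1) / (2 * r (i+1)) := by
        apply div_nonneg <;> linarith
      have h2x : r i / r (i+1) = (2 * r i) / (2 * r (i+1)) :=
        (mul_div_mul_left _ _ two_ne_zero).symm
      have hDeq : (2 * r i + 1) / (2 * r (i+1)) = r i / r (i+1) + 1 / (2 * r (i+1)) := by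
        rw [h2x, ← add_div]
      have hD : (2 * r i + 1) / (2 * r (i+1)) ≤ 1/2 + 1/32 * (1/4:ℝ)^ℓ := by
        rw [hDeq]; linarith
      have hE0 : 0 ≤ (2 * r (i+1) - 1) / (2 * r (i+1)) := by
        apply div_nonneg <;> linarith
      have hE : (2 * r (i+1) - 1) / (2 * r (i+1)) ≤ 1 := by
        rw [div_le_iff₀ hxp]; linarith
      have hF0 : 0 ≤ (2 * r (i+1) + 1) / (2 * r (i+1)) := by
        apply div_nonneg <;> linarith
      have hFeq : (2 * r (i+1) + 1) / (2 * r (i+1)) = 1 + 1 / (2 * r (i+1)) := by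
        rw [show (1:ℝ) + 1 / (2 * r (i+1)) = 2 * r (i+1) / (2 * r (i+1)) + 1 / (2 * r (i+1)) by
              rw [div_self (ne_of_gt hxp)],
            ← add_div]
      have hF : (2 * r (i+1) + 1) / (2 * r (i+1)) ≤ 1 + 1/32 * (1/4:ℝ)^ℓ := by
        rw [hFeq]; linarith
      -- nonneg of old bounds
      have hX1nn : (0:ℝ) ≤ 7/4 * (1/2:ℝ)^ℓ - 5/4 * (1/4:ℝ)^ℓ := by linarith
      have hX2nn : (0:ℝ) ≤ 7/4 * (1/2:ℝ)^ℓ - (1/4:ℝ)^ℓ := by linarith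
      have hQnn : (0:ℝ) ≤ 5 - 7/2 * (1/2:ℝ)^ℓ := by linarith
      have hQ5 : (5 - 7/2 * (1/2:ℝ)^ℓ) ≤ 5 := by linarith
      have hM45 : ∀ s : Fin 5, M s 4 ≤ 5 := fun s => (ih4 s).trans hQ5
      have hM35 : ∀ s : Fin 5, M s 3 ≤ 5 := fun s => (ih3 s).trans hQ5
      -- entry formulas
      have E0 := fun s => (mulN_apply r M i s).1
      have E1 := fun s => (mulN_apply r M i s).2.1
      have E2 := fun s => (mulN_apply r M i s).2.2.1
      have E3 := fun s => (mulN_apply r M i s).2.2.2.1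
      have E4 := fun s => (mulN_apply r M i s).2.2.2.2
      rw [hpr]
      clear hM hpr
      have hps : ∀ n : ℕ, ((1:ℝ)/2)^(ℓ+1) = (1/2)^ℓ * (1/2) := fun _ => pow_succ _ _
      refine ⟨?_, ?_, ?_, ?_, ?_, ?_, ?_, ?_⟩
      · intro s t
        fin_cases t
        · show 0 ≤ (M * Nmat r i) s 0
          rw [E0 s]; exact mul_nonneg (ihnn s 4) hG0.le
        · show 0 ≤ (M * Nmat r i) s 1
          rw [E1 s]
          exact add_nonneg (mul_nonneg (ihnn s 0) hA0) (mul_nonneg (ihnn s 1) hC0)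
        · show 0 ≤ (M * Nmat r i) s 2
          rw [E2 s]
          exact add_nonneg (mul_nonneg (ihnn s 0) hC0) (mul_nonneg (ihnn s 1) hD0)
        · show 0 ≤ (M * Nmat r i) s 3
          rw [E3 s]
          exact add_nonneg (mul_nonneg (ihnn s 2) hE0) (ihnn s 3)
        · show 0 ≤ (M * Nmat r i) s 4
          rw [E4 s]
          exact add_nonneg (ihnn s 2) (mul_nonneg (ihnn s 3) hF0)
      · intro s
        rw [E0 s]
        have t1 : M s 4 * (1 / (2 * r (i+1))) ≤ 5 * (1/32 * (1/4:ℝ)^ℓ) :=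
          mul_le_mul (hM45 s) hG hG0.le (by norm_num)
        rw [pow_succ]
        linarith
      · intro s
        rw [E1 s]
        have t1 : M s 0 * ((2 * r i - 1) / (2 * r (i+1))) ≤ (5/8 * (1/4:ℝ)^ℓ) * (1/2) :=
          mul_le_mul (ih0 s) hA hA0 (by positivity)
        have t2 : M s 1 * (r i / r (i+1)) ≤ (7/4 * (1/2:ℝ)^ℓ - 5/4 * (1/4:ℝ)^ℓ) * (1/2) :=
          mul_le_mul (ih1 s) hC hC0 hX1nn
        rw [pow_succ, pow_succ]
        linarith
      · intro s
        rw [E2 s]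
        have t1 : M s 0 * (r i / r (i+1)) ≤ (5/8 * (1/4:ℝ)^ℓ) * (1/2) :=
          mul_le_mul (ih0 s) hC hC0 (by positivity)
        have t2 : M s 1 * ((2 * r i + 1) / (2 * r (i+1))) ≤
            (7/4 * (1/2:ℝ)^ℓ - 5/4 * (1/4:ℝ)^ℓ) * (1/2 + 1/32 * (1/4:ℝ)^ℓ) :=
          mul_le_mul (ih1 s) hD hD0 hX1nn
        have hxy : (1/2:ℝ)^ℓ * (1/4:ℝ)^ℓ ≤ (1/4:ℝ)^ℓ := by nlinarith
        have hyy : (0:ℝ) ≤ (1/4:ℝ)^ℓ * (1/4:ℝ)^ℓ := by positivity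
        rw [pow_succ, pow_succ]
        nlinarith
      · intro s
        rw [E3 s]
        have t1 : M s 2 * ((2 * r (i+1) - 1) / (2 * r (i+1))) ≤
            (7/4 * (1/2:ℝ)^ℓ - (1/4:ℝ)^ℓ) * 1 :=
          mul_le_mul (ih2 s) hE hE0 hX2nn
        have t2 := ih3 s
        rw [pow_succ]
        linarith
      · intro s
        rw [E4 s]
        have t1 := ih2 s
        have t2 : M s 3 * ((2 * r (i+1) + 1) / (2 * r (i+1))) ≤
            (5 - 7/2 * (1/2:ℝ)^ℓ) * (1 + 1/32 * (1/4:ℝ)^ℓ) :=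
          mul_le_mul (ih3 s) hF hF0 hQnn
        have hxy : (0:ℝ) ≤ (1/2:ℝ)^ℓ * (1/4:ℝ)^ℓ := by positivity
        rw [pow_succ]
        nlinarith
      · rw [E3 2]
        have t1 : 0 ≤ M 2 2 * ((2 * r (i+1) - 1) / (2 * r (i+1))) :=
          mul_nonneg (ihnn 2 2) hE0
        linarith
      · rw [E3 3]
        have t1 : 0 ≤ M 3 2 * ((2 * r (i+1) - 1) / (2 * r (i+1))) :=
          mul_nonneg (ihnn 3 2) hE0
        linarith

lemma entries_le_5 (hε0 : 0 < ε) (hε : ε < 1 / 2) (hrpos : ∀ i, 1 ≤ i → 0 < r i)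
    (hr1 : 1 / ε ≤ r 1) (hstep : ∀ i, 1 ≤ i → r i ≤ ε * r (i + 1))
    (j : ℕ) (hj : 1 ≤ j) (ℓ : ℕ) :
    ∀ s t : Fin 5, prodN r j ℓ s t ≤ 5 := by
  obtain ⟨hnn, h0, h1, h2, h3, h4, _, _⟩ :=
    invariant ε r hε0 hε hrpos hr1 hstep j hj ℓ
  have hx1 : (1/2:ℝ)^ℓ ≤ 1 := pow_le_one₀ (by norm_num) (by norm_num)
  have hyx : (1/4:ℝ)^ℓ ≤ (1/2:ℝ)^ℓ := pow_le_pow_left₀ (by norm_num) (by norm_num) ℓ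
  have hy0 : (0:ℝ) < (1/4:ℝ)^ℓ := by positivity
  have hx0 : (0:ℝ) < (1/2:ℝ)^ℓ := by positivity
  intro s t
  fin_cases t
  · show prodN r j ℓ s 0 ≤ 5
    have := h0 s; nlinarith
  · show prodN r j ℓ s 1 ≤ 5
    have := h1 s; nlinarith
  · show prodN r j ℓ s 2 ≤ 5
    have := h2 s; nlinarith
  · show prodN r j ℓ s 3 ≤ 5
    have := h3 s; nlinarith
  · show prodN r j ℓ s 4 ≤ 5
    have := h4 s; nlinarith

lemma N0_mul_rows (P : Matrix (Fin 5) (Fin 5) ℝ) :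
    (Nmat r 0 * P) 2 3 = (2 * r (0+1) - 1) / (2 * r (0+1)) * P 3 3 + P 4 3 ∧
    (Nmat r 0 * P) 3 3 = P 3 3 + (2 * r (0+1) + 1) / (2 * r (0+1)) * P 4 3 := by
  constructor <;>
    simp [Nmat, Matrix.mul_apply, Fin.sum_univ_five, Matrix.vecHead, Matrix.vecTail]

end Main

/-- uniform bounds on the entries of `N_j N_{j+2} ⋯ N_{j+2ℓ}`:
all entries are at most `C`, the (3,4) entry (0-indexed (2,3)) is at least 1/3,
and the (4,4) entry (0-indexed (3,3)) is at least 1. -/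
theorem stmt5 (ε : ℝ) (hε0 : 0 < ε) (hε : ε < 1 / 2)
    (r : ℕ → ℝ) (hrpos : ∀ i, 1 ≤ i → 0 < r i)
    (hr1 : 1 / ε ≤ r 1) (hstep : ∀ i, 1 ≤ i → r i ≤ ε * r (i + 1)) :
    ∃ C : ℝ, 0 < C ∧ ∀ j ℓ : ℕ,
      (∀ s t : Fin 5, prodN r j ℓ s t ≤ C) ∧
      (1 / 3 : ℝ) ≤ prodN r j ℓ 2 3 ∧ (1 : ℝ) ≤ prodN r j ℓ 3 3 := by
  have hrg := rge ε r hε0 hε hrpos hr1 hstep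
  have hr12 : (2:ℝ) ≤ r 1 := by
    have := hrg 1 le_rfl; simpa using this
  have hr1p : (0:ℝ) < 2 * r 1 := by linarith
  set T0 : ℝ := ∑ s : Fin 5, ∑ t : Fin 5, |Nmat r 0 s t| with hT0def
  have hTrow : ∀ s : Fin 5, (∑ t : Fin 5, |Nmat r 0 s t|) ≤ T0 := fun s =>
    Finset.single_le_sum (f := fun s' => ∑ t : Fin 5, |Nmat r 0 s' t|)
      (fun s' _ => Finset.sum_nonneg fun t _ => abs_nonneg _) (Finset.mem_univ s)
  have hTent : ∀ s t : Fin 5, |Nmat r 0 s t| ≤ T0 := fun s t =>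
    le_trans (Finset.single_le_sum (f := fun t' => |Nmat r 0 s t'|)
      (fun t' _ => abs_nonneg _) (Finset.mem_univ t)) (hTrow s)
  have hT0 : (0:ℝ) ≤ T0 := Finset.sum_nonneg fun s _ =>
    Finset.sum_nonneg fun t _ => abs_nonneg _
  refine ⟨5 * T0 + 5, by positivity, ?_⟩
  intro j ℓ
  match j with
  | (j+1) =>
      obtain ⟨hnn, h0, h1, h2, h3, h4, hL, hL'⟩ :=
        invariant ε r hε0 hε hrpos hr1 hstep (j+1) (by omega) ℓ
      refine ⟨fun s t => ?_, hL, hL'⟩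
      have := entries_le_5 ε r hε0 hε hrpos hr1 hstep (j+1) (by omega) ℓ s t
      linarith
  | 0 =>
      match ℓ with
      | 0 =>
          rw [prodN_zero]
          refine ⟨fun s t => ?_, ?_, ?_⟩
          · have := hTent s t
            have := le_abs_self (Nmat r 0 s t)
            linarith
          · show (1/3:ℝ) ≤ (2 * r (0+1) - 1) / (2 * r (0+1))
            rw [le_div_iff₀ (by norm_num at hr1p ⊢; linarith)]
            norm_num
            linarith
          · show (1:ℝ) ≤ (1:ℝ)
            exact le_rfl
      | (ℓ+1) =>
          rw [prodN_cons]
          obtain ⟨Pnn, _, _, _, _, _, _, hP33⟩ :=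
            invariant ε r hε0 hε hrpos hr1 hstep 2 (by omega) ℓ
          have hP5 := entries_le_5 ε r hε0 hε hrpos hr1 hstep 2 (by omega) ℓ
          set P := prodN r (0+2) ℓ with hPdef
          have hPnn : ∀ s t : Fin 5, 0 ≤ P s t := by
            intro s t; rw [hPdef]; exact Pnn s t
          have hP5' : ∀ s t : Fin 5, P s t ≤ 5 := by
            intro s t; rw [hPdef]; exact hP5 s t
          have hP33' : (1:ℝ) ≤ P 3 3 := hP33
          refine ⟨fun s t => ?_, ?_, ?_⟩
          · rw [Matrix.mul_apply, Fin.sum_univ_five]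
            have hterm : ∀ k : Fin 5, Nmat r 0 s k * P k t ≤ |Nmat r 0 s k| * 5 := by
              intro k
              calc Nmat r 0 s k * P k t ≤ |Nmat r 0 s k| * P k t :=
                    mul_le_mul_of_nonneg_right (le_abs_self _) (hPnn k t)
                _ ≤ |Nmat r 0 s k| * 5 :=
                    mul_le_mul_of_nonneg_left (hP5' k t) (abs_nonneg _)
            have hrow := hTrow s
            rw [Fin.sum_univ_five] at hrow
            linarith [hterm 0, hterm 1, hterm 2, hterm 3, hterm 4]
          · rw [(N0_mul_rows r P).1]
            have hE0 : (0:ℝ) ≤ (2 * r (0+1) - 1) / (2 * r (0+1)) := by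
              apply div_nonneg <;> norm_num <;> linarith
            have hE : (3/4:ℝ) ≤ (2 * r (0+1) - 1) / (2 * r (0+1)) := by
              rw [le_div_iff₀ (by norm_num; linarith)]
              norm_num; linarith
            have h1 : (2 * r (0+1) - 1) / (2 * r (0+1)) * 1 ≤
                (2 * r (0+1) - 1) / (2 * r (0+1)) * P 3 3 :=
              mul_le_mul_of_nonneg_left hP33' hE0
            have h2 : (0:ℝ) ≤ P 4 3 := hPnn 4 3
            linarith
          · rw [(N0_mul_rows r P).2]
            have hF0 : (0:ℝ) ≤ (2 * r (0+1) + 1) / (2 * r (0+1)) := by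
              apply div_nonneg <;> norm_num <;> linarith
            have h2 : (0:ℝ) ≤ P 4 3 := hPnn 4 3
            nlinarith
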